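/- Let 0 < q < 1 and let A(ω) = a₁ω + a₀, B(ω) = b₂ω² + b₁ω be real polynomials with b₀ = 0, b₁ ≠ 0, b₂ ≠ 0, b₁ − (1−q)a₀ ≠ 0, b₂ − (1−q)a₁ ≠ 0, and suppose q·b₁/(b₁ − (1−q)a₀) > 0. Let a = −b₁/b₂ ≠ 0 be the nonzero root of B, let c ≠ 0 be the nonzero root of B(ω) − (1−q)ω·A(ω) = (b₂ − (1−q)a₁)ω² + (b₁ − (1−q)a₀)ω, and let r ∈ ℝ be defined by q^{−r} = q·b₁/(b₁ − (1−q)a₀). Then the function ϱ(ω) := ω^r · (qω/a; q)_∞ / (ω/c; q)_∞, defined for real ω > 0 with (ω/c; q)_∞ ≠ 0, satisfies ϱ(ω)·(B(ω) − (1−q)ω·A(ω)) = B(qω)·ϱ(qω) at every ω > 0 where both sides are defined. -/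

import Mathlib

/-- The infinite q-Pochhammer symbol `(x; q)_∞ = ∏_{k=0}^∞ (1 − qᵏx)` over `ℝ`. -/
noncomputable def qPochR (q x : ℝ) : ℝ :=
  ∏' k : ℕ, (1 - q ^ k * x)

/-!
Both `B` and `B(ω) − (1−q)ωA(ω)` vanish at `0`, so each is a constant multiple of
`ω (1 − ω/root)`. The Pochhammer recursion `(x; q)_∞ = (1 − x)(qx; q)_∞` then shows that
`ϱ(ω)(1 − ω/c) = q^{−r}(1 − qω/a) ϱ(qω)`, and the defining relation of `r` matches the
remaining constants `b₁ − (1−q)a₀` and `q b₁`.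
-/

lemma multipliable_one_sub_pow_mul {q : ℝ} (hq : |q| < 1) (x : ℝ) :
    Multipliable fun k : ℕ => 1 - q ^ k * x := by
  have hs : Summable fun k : ℕ => -(q ^ k * x) :=
    ((summable_geometric_of_abs_lt_one hq).mul_right x).neg
  simpa only [← sub_eq_add_neg] using Real.multipliable_one_add_of_summable hs

lemma qPochR_eq_one_sub_mul {q : ℝ} (hq : |q| < 1) (x : ℝ) :
    qPochR q x = (1 - x) * qPochR q (q * x) := by
  have hshift : Multipliable fun k : ℕ => 1 - q ^ (k + 1) * x := by
    simpa only [pow_succ, mul_assoc] using multipliable_one_sub_pow_mul hq (q * x)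
  unfold qPochR
  rw [tprod_eq_zero_mul' (f := fun k : ℕ => 1 - q ^ k * x) hshift]
  simp only [pow_zero, one_mul, pow_succ, mul_assoc]

lemma mul_sq_add_mul_eq_of_root {u v c : ℝ} (hc : c ≠ 0) (hroot : u * c ^ 2 + v * c = 0)
    (ω : ℝ) : u * ω ^ 2 + v * ω = v * ω * (1 - ω / c) := by
  have huc : u * c = -v := by
    have : c * (u * c + v) = 0 := by linear_combination hroot
    linarith [(mul_eq_zero.1 this).resolve_left hc]
  field_simp
  linear_combination ω ^ 2 * huc

noncomputable def qPearsonWeight (q a c r ω : ℝ) : ℝ :=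
  ω ^ r * qPochR q (q * ω / a) / qPochR q (ω / c)

lemma qPearsonWeight_mul_one_sub {q a c r ω : ℝ} (hq0 : 0 < q) (hq1 : q < 1) (hω : 0 < ω)
    (hP : qPochR q (ω / c) ≠ 0) :
    qPearsonWeight q a c r ω * (1 - ω / c) =
      q ^ (-r) * (1 - q * ω / a) * qPearsonWeight q a c r (q * ω) := by
  have hq : |q| < 1 := abs_lt.2 ⟨by linarith, hq1⟩
  have hc : qPochR q (ω / c) = (1 - ω / c) * qPochR q (q * ω / c) := by
    rw [qPochR_eq_one_sub_mul hq, mul_div_assoc]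
  have ha : qPochR q (q * ω / a) = (1 - q * ω / a) * qPochR q (q * (q * ω) / a) := by
    rw [qPochR_eq_one_sub_mul hq, mul_div_assoc q (q * ω)]
  have hc1 : 1 - ω / c ≠ 0 := fun h => hP (by rw [hc, h, zero_mul])
  have hqr : q ^ (-r) * q ^ r = 1 := by
    rw [← Real.rpow_add hq0, neg_add_cancel, Real.rpow_zero]
  unfold qPearsonWeight
  rw [hc, ha, Real.mul_rpow hq0.le hω.le, mul_comm (1 - ω / c), ← div_div,
    div_mul_cancel₀ _ hc1]
  linear_combination (-(ω ^ r * (1 - q * ω / a) * qPochR q (q * (q * ω) / a) /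
    qPochR q (q * ω / c))) * hqr

theorem stmt_9_general (q a₀ a₁ b₁ b₂ a c r : ℝ) (hq0 : 0 < q) (hq1 : q < 1)
    (A B : ℝ → ℝ)
    (hA : ∀ ω : ℝ, A ω = a₁ * ω + a₀)
    (hB : ∀ ω : ℝ, B ω = b₂ * ω ^ 2 + b₁ * ω)
    (ha : a = -b₁ / b₂) (ha0 : a ≠ 0)
    (hc0 : c ≠ 0) (hcroot : (b₂ - (1 - q) * a₁) * c ^ 2 + (b₁ - (1 - q) * a₀) * c = 0)
    (hr : q ^ (-r) = q * b₁ / (b₁ - (1 - q) * a₀))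
    (ϱ : ℝ → ℝ)
    (hϱ : ∀ ω : ℝ, 0 < ω → ϱ ω = ω ^ r * qPochR q (q * ω / a) / qPochR q (ω / c)) :
    ∀ ω : ℝ, 0 < ω → qPochR q (ω / c) ≠ 0 → qPochR q (q * ω / c) ≠ 0 →
      ϱ ω * (B ω - (1 - q) * ω * A ω) = B (q * ω) * ϱ (q * ω) := by
  intro ω hω hP _
  have hb₂ : b₂ ≠ 0 := by rintro rfl; simp [ha] at ha0
  have haroot : b₂ * a ^ 2 + b₁ * a = 0 := by rw [ha]; field_simp; ring
  have hL : b₁ - (1 - q) * a₀ ≠ 0 := by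
    intro h
    have := Real.rpow_pos_of_pos hq0 (-r)
    rw [hr, h, div_zero] at this
    exact this.false
  have hBA : B ω - (1 - q) * ω * A ω = (b₁ - (1 - q) * a₀) * ω * (1 - ω / c) := by
    rw [← mul_sq_add_mul_eq_of_root hc0 hcroot, hA, hB]
    ring
  have hBq : B (q * ω) = b₁ * (q * ω) * (1 - q * ω / a) := by
    rw [hB, mul_sq_add_mul_eq_of_root ha0 haroot]
  have hw := qPearsonWeight_mul_one_sub (a := a) (r := r) hq0 hq1 hω hP
  rw [hϱ ω hω, hϱ (q * ω) (mul_pos hq0 hω), hBA, hBq]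
  change qPearsonWeight q a c r ω * _ = _ * qPearsonWeight q a c r (q * ω)
  calc _ = qPearsonWeight q a c r ω * (1 - ω / c) * ((b₁ - (1 - q) * a₀) * ω) := by ring
    _ = _ := by rw [hw, hr]; field_simp

/-- Let `0 < q < 1` and `A(ω) = a₁ω + a₀`, `B(ω) = b₂ω² + b₁ω` with
`b₁ ≠ 0`, `b₂ ≠ 0`, `b₁ − (1−q)a₀ ≠ 0`, `b₂ − (1−q)a₁ ≠ 0`, and `q·b₁/(b₁−(1−q)a₀) > 0`.
Let `a = −b₁/b₂` be the nonzero root of `B`, let `c ≠ 0` be the nonzero root of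
`B(ω) − (1−q)ωA(ω) = (b₂−(1−q)a₁)ω² + (b₁−(1−q)a₀)ω`, and let `r` satisfy
`q^{−r} = q·b₁/(b₁−(1−q)a₀)`.  Then `ϱ(ω) = ω^r·(qω/a;q)_∞/(ω/c;q)_∞` (real power for
`ω > 0`) satisfies `ϱ(ω)(B(ω) − (1−q)ωA(ω)) = B(qω)ϱ(qω)` at every `ω > 0` where both
sides are defined. -/
theorem stmt_9 (q a₀ a₁ b₁ b₂ a c r : ℝ) (hq0 : 0 < q) (hq1 : q < 1)
    (A B : ℝ → ℝ)
    (hA : ∀ ω : ℝ, A ω = a₁ * ω + a₀)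
    (hB : ∀ ω : ℝ, B ω = b₂ * ω ^ 2 + b₁ * ω)
    (hb₁ : b₁ ≠ 0) (hb₂ : b₂ ≠ 0)
    (hlin : b₁ - (1 - q) * a₀ ≠ 0) (hlead : b₂ - (1 - q) * a₁ ≠ 0)
    (hpos : 0 < q * b₁ / (b₁ - (1 - q) * a₀))
    (ha : a = -b₁ / b₂) (ha0 : a ≠ 0)
    (hc0 : c ≠ 0) (hcroot : (b₂ - (1 - q) * a₁) * c ^ 2 + (b₁ - (1 - q) * a₀) * c = 0)
    (hr : q ^ (-r) = q * b₁ / (b₁ - (1 - q) * a₀))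
    (ϱ : ℝ → ℝ)
    (hϱ : ∀ ω : ℝ, 0 < ω → ϱ ω = ω ^ r * qPochR q (q * ω / a) / qPochR q (ω / c)) :
    ∀ ω : ℝ, 0 < ω → qPochR q (ω / c) ≠ 0 → qPochR q (q * ω / c) ≠ 0 →
      ϱ ω * (B ω - (1 - q) * ω * A ω) = B (q * ω) * ϱ (q * ω) :=
  stmt_9_general q a₀ a₁ b₁ b₂ a c r hq0 hq1 A B hA hB ha ha0 hc0 hcroot hr ϱ hϱ
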